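/- Let M be a Lagrangian submanifold of a complex space form M^n(4c) of constant holomorphic sectional curvature 4c. For each (n_1,...,n_k) ∈ S(n), one has δ(n_1,...,n_k) ≤ [n²(n+k−1−Σ n_j)/(2(n+k−Σ n_j))]·H² + ½[n(n−1) − Σ n_j(n_j−1)]·c. Moreover, if equality holds at a point, then the mean curvature vector vanishes at that point (M is minimal there). -/

import Mathlib

open scoped RealInnerProductSpace BigOperators

noncomputable section

/-- Euclidean `n`-space, modelling the tangent space `T_pM` of a Riemannian
`n`-manifold at a point (via a linear isometry given by an orthonormal frame). -/
abbrev EV (n : ℕ) : Type := EuclideanSpace ℝ (Fin n)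

/-- The standard orthonormal basis of `EV n`. -/
def stdB (n : ℕ) (i : Fin n) : EV n := EuclideanSpace.basisFun (Fin n) ℝ i

/-- Two vectors forming an orthonormal pair (hence spanning a 2-plane). -/
def OrthoPair {n : ℕ} (X Y : EV n) : Prop := Orthonormal ℝ ![X, Y]

/-- `τ` of a family of vectors: the sum `∑_{α<β} K(e_α ∧ e_β)` of sectional
curvatures over pairs of the family.  Applied to an orthonormal basis of a
subspace `L` this is the scalar curvature `τ(L)`. -/
def tauFam {n : ℕ} (K : EV n → EV n → ℝ) {r : ℕ} (e : Fin r → EV n) : ℝ :=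
  ∑ p ∈ Finset.univ.filter (fun p : Fin r × Fin r => p.1 < p.2), K (e p.1) (e p.2)

/-- The scalar curvature `τ = ∑_{i<j} K(e_i ∧ e_j)` at a point, computed in an
orthonormal basis. -/
def scalarCurv {n : ℕ} (K : EV n → EV n → ℝ) : ℝ := tauFam K (stdB n)

/-- The set of values `τ(L_1) + ⋯ + τ(L_k)` where `L_1, …, L_k` run over mutually
orthogonal subspaces of `T_pM` with `dim L_j = d j`; such a configuration is
encoded by a jointly orthonormal family `e : (Σ j, Fin (d j)) → EV n`, the
subspace `L_j` being spanned by `e ⟨j, ·⟩`. -/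
def deltaSet {n : ℕ} (K : EV n → EV n → ℝ) {k : ℕ} (d : Fin k → ℕ) : Set ℝ :=
  { s | ∃ e : (Σ j : Fin k, Fin (d j)) → EV n, Orthonormal ℝ e ∧
        s = ∑ j : Fin k, tauFam K (fun a => e ⟨j, a⟩) }

/-- Chen's δ-invariant `δ(d 0, …, d (k-1)) = τ - inf (τ(L_1) + ⋯ + τ(L_k))`. -/
def deltaInv {n : ℕ} (K : EV n → EV n → ℝ) {k : ℕ} (d : Fin k → ℕ) : ℝ :=
  scalarCurv K - sInf (deltaSet K d)

/-- Membership of a `k`-tuple `(n_1, …, n_k)` in the set `𝒮(n)`: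
`2 ≤ n_j ≤ n - 1` for each `j`, and `n_1 + ⋯ + n_k ≤ n`. -/
def InS (n : ℕ) {k : ℕ} (d : Fin k → ℕ) : Prop :=
  (∀ j, 2 ≤ d j ∧ d j ≤ n - 1) ∧ ∑ j, d j ≤ n

/-- Chen's coefficient `c(n_1,…,n_k) = n²(n+k-1-Σn_j) / (2(n+k-Σn_j))`. -/
def cCoeff (n : ℕ) {k : ℕ} (d : Fin k → ℕ) : ℝ :=
  ((n : ℝ) ^ 2 * ((n : ℝ) + (k : ℝ) - 1 - ∑ j, (d j : ℝ))) /
    (2 * ((n : ℝ) + (k : ℝ) - ∑ j, (d j : ℝ)))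

/-- The normalized δ-invariant `Δ(n_1,…,n_k) = δ(n_1,…,n_k)/c(n_1,…,n_k)`. -/
def normDelta {n : ℕ} (K : EV n → EV n → ℝ) {k : ℕ} (d : Fin k → ℕ) : ℝ :=
  deltaInv K d / cCoeff n d

/-- Sectional curvature of the submanifold obtained from the Gauss equation:
`K(X∧Y) = K̃(X∧Y) + ⟨h(X,X),h(Y,Y)⟩ - ‖h(X,Y)‖²` (for an orthonormal pair
`X, Y`), where `K̃` is the ambient sectional curvature restricted to the tangent
space and `h` is the second fundamental form at the point. -/
def gaussK {n : ℕ} {F : Type*} [NormedAddCommGroup F] [InnerProductSpace ℝ F]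
    (Ktil : EV n → EV n → ℝ) (h : EV n →ₗ[ℝ] EV n →ₗ[ℝ] F) : EV n → EV n → ℝ :=
  fun X Y => Ktil X Y + ⟪h X X, h Y Y⟫ - ‖h X Y‖ ^ 2

/-- The mean curvature vector `H = (1/n) trace h` of a second fundamental form. -/
def meanCurv {n : ℕ} {F : Type*} [NormedAddCommGroup F] [InnerProductSpace ℝ F]
    (h : EV n →ₗ[ℝ] EV n →ₗ[ℝ] F) : F :=
  (n : ℝ)⁻¹ • ∑ i, h (stdB n i) (stdB n i)

/-!
Extend an orthonormal frame adapted to `L_1, …, L_k` to an orthonormal basis and regard the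
`n - ∑ n_j` remaining vectors as blocks of size one, so that there are `γ = n + k - ∑ n_j`
blocks. By the Gauss equation, `2 (τ - ∑ τ(L_j))` is the curvature term plus
`‖∑ w_s‖² - ∑ ‖w_s‖² - ∑_{different blocks} ‖h(e_x, e_y)‖²`, where `w_s` is the trace of `h`
over block `s` and `∑ w_s = n H`. Cauchy–Schwarz, `γ ∑ ‖w_s‖² ≥ ‖∑ w_s‖²`, gives the
inequality with coefficient `n² (γ - 1) / (2γ)`. The infimum defining `δ` is attained by
compactness, so equality forces all `w_s` to be equal and `h` to vanish on pairs from different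
blocks. For a Lagrangian submanifold `⟪h(X,X), Z⟫ = ⟪h(X,Z), X⟫`, so each `w_s` is orthogonal
to every basis vector outside block `s`; since `γ ≥ 2`, the common value is orthogonal to
everything and `H = 0`.
-/

namespace OrthonormalBasis

variable {ι ι' E M F : Type*} [Fintype ι] [Fintype ι']
  [NormedAddCommGroup E] [InnerProductSpace ℝ E] [AddCommGroup M] [Module ℝ M]
  [NormedAddCommGroup F] [InnerProductSpace ℝ F]

theorem sum_bilin_apply_self_eq (B : E →ₗ[ℝ] E →ₗ[ℝ] M) (b : OrthonormalBasis ι ℝ E)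
    (b' : OrthonormalBasis ι' ℝ E) : ∑ i, B (b i) (b i) = ∑ j, B (b' j) (b' j) := by
  calc ∑ i, B (b i) (b i)
      = ∑ i, B (∑ j, ⟪b' j, b i⟫ • b' j) (b i) := by simp_rw [b'.sum_repr']
    _ = ∑ j, B (b' j) (∑ i, ⟪b i, b' j⟫ • b i) := by
        simp only [map_sum, map_smul, LinearMap.sum_apply, LinearMap.smul_apply]
        rw [Finset.sum_comm]
        simp_rw [real_inner_comm]
    _ = ∑ j, B (b' j) (b' j) := by simp_rw [b.sum_repr']

theorem sum_norm_sq_apply_eq (T : E →ₗ[ℝ] F) (b : OrthonormalBasis ι ℝ E)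
    (b' : OrthonormalBasis ι' ℝ E) : ∑ i, ‖T (b i)‖ ^ 2 = ∑ j, ‖T (b' j)‖ ^ 2 := by
  simpa [real_inner_self_eq_norm_sq] using sum_bilin_apply_self_eq ((innerₗ F).compl₁₂ T T) b b'

theorem sum_sum_norm_sq_bilin_apply_eq (B : E →ₗ[ℝ] E →ₗ[ℝ] F) (b : OrthonormalBasis ι ℝ E)
    (b' : OrthonormalBasis ι' ℝ E) :
    ∑ i, ∑ j, ‖B (b i) (b j)‖ ^ 2 = ∑ i, ∑ j, ‖B (b' i) (b' j)‖ ^ 2 := by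
  calc ∑ i, ∑ j, ‖B (b i) (b j)‖ ^ 2
      = ∑ j, ∑ i, ‖B.flip (b' j) (b i)‖ ^ 2 := by
        simp_rw [fun i => sum_norm_sq_apply_eq (B (b i)) b b']
        exact Finset.sum_comm
    _ = ∑ i, ∑ j, ‖B (b' i) (b' j)‖ ^ 2 := by
        simp_rw [fun j => sum_norm_sq_apply_eq (B.flip (b' j)) b b']
        exact Finset.sum_comm

end OrthonormalBasis

theorem two_mul_sum_filter_lt {α : Type*} [Fintype α] [LinearOrder α] (G : α → α → ℝ)
    (hG : ∀ a b, G a b = G b a) :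
    2 * ∑ p ∈ Finset.univ.filter (fun p : α × α => p.1 < p.2), G p.1 p.2
      = ∑ a, ∑ b, G a b - ∑ a, G a a := by
  have hsplit : ∀ a b, G a b = (if a < b then G a b else 0) + (if b < a then G b a else 0)
      + (if a = b then G a a else 0) := by
    intro a b
    rcases lt_trichotomy a b with hab | rfl | hab
    · simp [hab, hab.not_gt, hab.ne]
    · simp
    · simp [hab, hab.not_gt, hab.ne', hG a b]
  simp_rw [Finset.sum_filter, Fintype.sum_prod_type]
  conv_rhs => enter [1, 2, a, 2, b]; rw [hsplit a b]
  simp only [Finset.sum_add_distrib, Finset.sum_ite_eq, Finset.mem_univ, if_true]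
  rw [Finset.sum_comm (f := fun a b => if b < a then G b a else 0)]
  ring

theorem card_mul_sum_norm_sq_sub_norm_sq_sum {σ E : Type*} [NormedAddCommGroup E]
    [InnerProductSpace ℝ E] (s : Finset σ) (w : σ → E) :
    (s.card : ℝ) * ∑ t ∈ s, ‖w t‖ ^ 2 - ‖∑ t ∈ s, w t‖ ^ 2
      = (∑ t ∈ s, ∑ t' ∈ s, ‖w t - w t'‖ ^ 2) / 2 := by
  simp_rw [norm_sub_sq_real, ← real_inner_self_eq_norm_sq, sum_inner, inner_sum,
    Finset.sum_add_distrib, Finset.sum_sub_distrib, Finset.sum_const, nsmul_eq_mul,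
    ← Finset.mul_sum]
  ring

section SecondFundamentalForm

variable {n : ℕ} {F : Type*} [NormedAddCommGroup F] [InnerProductSpace ℝ F]

theorem two_mul_tauFam_gaussK (c : ℝ) (h : EV n →ₗ[ℝ] EV n →ₗ[ℝ] F)
    (hsymm : ∀ X Y, h X Y = h Y X) {r : ℕ} (u : Fin r → EV n) :
    2 * tauFam (gaussK (fun _ _ => c) h) u
      = (r * (r - 1) : ℝ) * c + ‖∑ a, h (u a) (u a)‖ ^ 2 - ∑ a, ∑ b, ‖h (u a) (u b)‖ ^ 2 := by
  rw [tauFam, two_mul_sum_filter_lt (fun a b => gaussK (fun _ _ => c) h (u a) (u b))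
    fun a b => by simp only [gaussK, real_inner_comm, hsymm]]
  have hsq : ‖∑ a, h (u a) (u a)‖ ^ 2 = ∑ a, ∑ b, ⟪h (u a) (u a), h (u b) (u b)⟫ := by
    rw [← real_inner_self_eq_norm_sq, sum_inner]
    simp_rw [inner_sum]
  simp only [gaussK, real_inner_self_eq_norm_sq, Finset.sum_add_distrib, Finset.sum_sub_distrib,
    Finset.sum_const, Finset.card_univ, Fintype.card_fin, nsmul_eq_mul, hsq]
  ring

theorem natCast_smul_meanCurv (h : EV n →ₗ[ℝ] EV n →ₗ[ℝ] F) :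
    (n : ℝ) • meanCurv h = ∑ i, h (stdB n i) (stdB n i) := by
  rcases Nat.eq_zero_or_pos n with rfl | hn
  · simp
  · exact smul_inv_smul₀ (by positivity) _

end SecondFundamentalForm

theorem Fintype.sum_sum_sigma_eq_add_offDiag {κ : Type*} {β : κ → Type*} [Fintype κ]
    [∀ s, Fintype (β s)] [DecidableEq κ] {M : Type*} [AddCommMonoid M]
    (f : (Σ s, β s) → (Σ s, β s) → M) :
    ∑ x, ∑ y, f x y
      = ∑ s, ∑ a, ∑ a', f ⟨s, a⟩ ⟨s, a'⟩ + ∑ x, ∑ y, if x.1 = y.1 then 0 else f x y := by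
  have hsplit : ∀ x y, f x y = (if x.1 = y.1 then f x y else 0) + if x.1 = y.1 then 0 else f x y :=
    fun x y => by split_ifs <;> simp
  have hdiag : ∀ x : Σ s, β s, ∑ y, (if x.1 = y.1 then f x y else 0) = ∑ a', f x ⟨x.1, a'⟩ := by
    intro x
    rw [Fintype.sum_sigma, Fintype.sum_eq_single x.1 fun s hs => by simp [Ne.symm hs]]
    simp
  rw [Finset.sum_congr rfl fun x _ => Finset.sum_congr rfl fun y _ => hsplit x y]
  simp only [Finset.sum_add_distrib, hdiag]
  rw [Fintype.sum_sigma]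

section Blocks

variable {κ : Type*} [Fintype κ] {m : κ → ℕ} {E F : Type*} [AddCommGroup E] [Module ℝ E]

def blockTrace [AddCommGroup F] [Module ℝ F] (h : E →ₗ[ℝ] E →ₗ[ℝ] F)
    (b : (Σ s : κ, Fin (m s)) → E) (s : κ) : F :=
  ∑ a, h (b ⟨s, a⟩) (b ⟨s, a⟩)

variable [NormedAddCommGroup F] [InnerProductSpace ℝ F] [DecidableEq κ]

def offBlockNormSq (h : E →ₗ[ℝ] E →ₗ[ℝ] F) (b : (Σ s : κ, Fin (m s)) → E) : ℝ :=
  ∑ x, ∑ y, if x.1 = y.1 then 0 else ‖h (b x) (b y)‖ ^ 2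

theorem offBlockNormSq_nonneg (h : E →ₗ[ℝ] E →ₗ[ℝ] F) (b : (Σ s : κ, Fin (m s)) → E) :
    0 ≤ offBlockNormSq h b :=
  Finset.sum_nonneg fun _ _ => Finset.sum_nonneg fun _ _ => by split_ifs <;> positivity

theorem apply_eq_zero_of_offBlockNormSq_eq_zero {h : E →ₗ[ℝ] E →ₗ[ℝ] F}
    {b : (Σ s : κ, Fin (m s)) → E} (h0 : offBlockNormSq h b = 0) {x y : Σ s : κ, Fin (m s)}
    (hxy : x.1 ≠ y.1) : h (b x) (b y) = 0 := by
  have hnn : ∀ x y : Σ s : κ, Fin (m s),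
      0 ≤ if x.1 = y.1 then (0 : ℝ) else ‖h (b x) (b y)‖ ^ 2 :=
    fun _ _ => by split_ifs <;> positivity
  have := (Finset.sum_eq_zero_iff_of_nonneg fun y _ => hnn x y).1
    ((Finset.sum_eq_zero_iff_of_nonneg fun x _ => Finset.sum_nonneg fun y _ => hnn x y).1 h0
      x (Finset.mem_univ _)) y (Finset.mem_univ _)
  simpa [hxy] using this

end Blocks

theorem two_mul_scalarCurv_sub_sum_tauFam {n : ℕ} {F : Type*} [NormedAddCommGroup F]
    [InnerProductSpace ℝ F] {κ : Type*} [Fintype κ] [DecidableEq κ] {m : κ → ℕ} (c : ℝ)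
    (h : EV n →ₗ[ℝ] EV n →ₗ[ℝ] F) (hsymm : ∀ X Y, h X Y = h Y X)
    (b : OrthonormalBasis (Σ s : κ, Fin (m s)) ℝ (EV n)) :
    2 * (scalarCurv (gaussK (fun _ _ => c) h)
        - ∑ s, tauFam (gaussK (fun _ _ => c) h) (fun a => b ⟨s, a⟩))
      = ((n : ℝ) * (n - 1) - ∑ s, (m s : ℝ) * (m s - 1)) * c + ‖∑ s, blockTrace h b s‖ ^ 2
        - ∑ s, ‖blockTrace h b s‖ ^ 2 - offBlockNormSq h b := by
  have hscal : 2 * scalarCurv (gaussK (fun _ _ => c) h)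
      = (n * (n - 1) : ℝ) * c + ‖∑ s, blockTrace h b s‖ ^ 2
        - (∑ s, ∑ a, ∑ a', ‖h (b ⟨s, a⟩) (b ⟨s, a'⟩)‖ ^ 2 + offBlockNormSq h b) := by
    rw [scalarCurv, two_mul_tauFam_gaussK c h hsymm]
    simp only [stdB]
    rw [OrthonormalBasis.sum_bilin_apply_self_eq h _ b,
      OrthonormalBasis.sum_sum_norm_sq_bilin_apply_eq h _ b,
      Fintype.sum_sum_sigma_eq_add_offDiag, Fintype.sum_sigma]
    rfl
  have hblock : ∀ s, 2 * tauFam (gaussK (fun _ _ => c) h) (fun a => b ⟨s, a⟩)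
      = (m s * (m s - 1) : ℝ) * c + ‖blockTrace h b s‖ ^ 2
        - ∑ a, ∑ a', ‖h (b ⟨s, a⟩) (b ⟨s, a'⟩)‖ ^ 2 :=
    fun s => two_mul_tauFam_gaussK c h hsymm _
  rw [mul_sub, hscal, Finset.mul_sum, Finset.sum_congr rfl fun s _ => hblock s]
  simp only [Finset.sum_sub_distrib, Finset.sum_add_distrib, ← Finset.sum_mul]
  ring

theorem blockTrace_eq_zero_of_lagrangian {E κ : Type*} [NormedAddCommGroup E]
    [InnerProductSpace ℝ E] [Fintype κ] [Nontrivial κ] {m : κ → ℕ} (h : E →ₗ[ℝ] E →ₗ[ℝ] E)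
    (hlag : ∀ X Y Z, ⟪h X Y, Z⟫ = ⟪h X Z, Y⟫) (b : OrthonormalBasis (Σ s : κ, Fin (m s)) ℝ E)
    (hoff : ∀ x y, x.1 ≠ y.1 → h (b x) (b y) = 0)
    (hconst : ∀ s s', blockTrace h b s = blockTrace h b s') (s : κ) :
    blockTrace h b s = 0 := by
  refine InnerProductSpace.ext_inner_left_basis b.toBasis fun y => ?_
  obtain ⟨s', hs'⟩ := exists_ne y.1
  rw [b.coe_toBasis, inner_zero_right, hconst s s', blockTrace, inner_sum]
  refine Finset.sum_eq_zero fun a _ => ?_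
  rw [real_inner_comm, hlag, hoff ⟨s', a⟩ y hs', inner_zero_left]

section ChenInequality

variable {n : ℕ} {F : Type*} [NormedAddCommGroup F] [InnerProductSpace ℝ F]
  {κ : Type*} [Fintype κ] {m : κ → ℕ}

theorem sum_blockTrace_eq (h : EV n →ₗ[ℝ] EV n →ₗ[ℝ] F)
    (b : OrthonormalBasis (Σ s : κ, Fin (m s)) ℝ (EV n)) :
    ∑ s, blockTrace h b s = ∑ i, h (stdB n i) (stdB n i) := by
  simp only [blockTrace, stdB, ← Fintype.sum_sigma (fun x => h (b x) (b x))]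
  exact OrthonormalBasis.sum_bilin_apply_self_eq h b _

variable [DecidableEq κ]

theorem chen_block_bound_sub_eq [Nonempty κ] (c : ℝ) (h : EV n →ₗ[ℝ] EV n →ₗ[ℝ] F)
    (hsymm : ∀ X Y, h X Y = h Y X) (b : OrthonormalBasis (Σ s : κ, Fin (m s)) ℝ (EV n)) :
    (n : ℝ) ^ 2 * (Fintype.card κ - 1) / (2 * Fintype.card κ) * ‖meanCurv h‖ ^ 2
        + 1 / 2 * ((n : ℝ) * (n - 1) - ∑ s, (m s : ℝ) * (m s - 1)) * c
        - (scalarCurv (gaussK (fun _ _ => c) h)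
          - ∑ s, tauFam (gaussK (fun _ _ => c) h) (fun a => b ⟨s, a⟩))
      = ((∑ s, ∑ s', ‖blockTrace h b s - blockTrace h b s'‖ ^ 2) / (2 * Fintype.card κ)
          + offBlockNormSq h b) / 2 := by
  have hγ : (0 : ℝ) < Fintype.card κ := by exact_mod_cast Fintype.card_pos
  have hgauss := two_mul_scalarCurv_sub_sum_tauFam c h hsymm b
  have hvar := card_mul_sum_norm_sq_sub_norm_sq_sum Finset.univ (blockTrace h b)
  rw [Finset.card_univ] at hvar
  have hmean : ‖∑ s, blockTrace h b s‖ ^ 2 = (n : ℝ) ^ 2 * ‖meanCurv h‖ ^ 2 := by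
    rw [sum_blockTrace_eq, ← natCast_smul_meanCurv, norm_smul, mul_pow, Real.norm_natCast]
  rw [hmean] at hgauss hvar
  field_simp
  linear_combination (-2 * Fintype.card κ : ℝ) * hgauss + 2 * hvar

theorem chen_block_inequality [Nonempty κ] (c : ℝ) (h : EV n →ₗ[ℝ] EV n →ₗ[ℝ] F)
    (hsymm : ∀ X Y, h X Y = h Y X) (b : OrthonormalBasis (Σ s : κ, Fin (m s)) ℝ (EV n)) :
    scalarCurv (gaussK (fun _ _ => c) h)
        - ∑ s, tauFam (gaussK (fun _ _ => c) h) (fun a => b ⟨s, a⟩)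
      ≤ (n : ℝ) ^ 2 * (Fintype.card κ - 1) / (2 * Fintype.card κ) * ‖meanCurv h‖ ^ 2
        + 1 / 2 * ((n : ℝ) * (n - 1) - ∑ s, (m s : ℝ) * (m s - 1)) * c := by
  have hgap := chen_block_bound_sub_eq c h hsymm b
  have : 0 ≤ ((∑ s, ∑ s', ‖blockTrace h b s - blockTrace h b s'‖ ^ 2) / (2 * Fintype.card κ)
      + offBlockNormSq h b) / 2 := by
    have := offBlockNormSq_nonneg h b
    positivity
  linarith

theorem meanCurv_eq_zero_of_chen_block_eq [Nontrivial κ] (c : ℝ) (h : EV n →ₗ[ℝ] EV n →ₗ[ℝ] EV n)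
    (hsymm : ∀ X Y, h X Y = h Y X) (hlag : ∀ X Y Z, ⟪h X Y, Z⟫ = ⟪h X Z, Y⟫)
    (b : OrthonormalBasis (Σ s : κ, Fin (m s)) ℝ (EV n))
    (heq : scalarCurv (gaussK (fun _ _ => c) h)
        - ∑ s, tauFam (gaussK (fun _ _ => c) h) (fun a => b ⟨s, a⟩)
      = (n : ℝ) ^ 2 * (Fintype.card κ - 1) / (2 * Fintype.card κ) * ‖meanCurv h‖ ^ 2
        + 1 / 2 * ((n : ℝ) * (n - 1) - ∑ s, (m s : ℝ) * (m s - 1)) * c) :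
    meanCurv h = 0 := by
  have hgap := chen_block_bound_sub_eq c h hsymm b
  rw [← heq, sub_self] at hgap
  have hγ : (0 : ℝ) < Fintype.card κ := by exact_mod_cast Fintype.card_pos
  obtain ⟨hV0, hR0⟩ := (add_eq_zero_iff_of_nonneg (by positivity) (offBlockNormSq_nonneg h b)).1
    ((div_eq_zero_iff.1 hgap.symm).resolve_right two_ne_zero)
  have hconst : ∀ s s', blockTrace h b s = blockTrace h b s' := by
    intro s s'
    have hs := (Finset.sum_eq_zero_iff_of_nonneg fun _ _ => by positivity).1
      ((div_eq_zero_iff.1 hV0).resolve_right (by positivity)) s (Finset.mem_univ _)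
    have := (Finset.sum_eq_zero_iff_of_nonneg fun _ _ => by positivity).1 hs s' (Finset.mem_univ _)
    simpa [sub_eq_zero] using this
  have hzero := blockTrace_eq_zero_of_lagrangian h hlag b
    (fun _ _ => apply_eq_zero_of_offBlockNormSq_eq_zero hR0) hconst
  rw [meanCurv, ← sum_blockTrace_eq h b]
  simp [hzero]

end ChenInequality

theorem Orthonormal.exists_orthonormalBasis_comp_eq {𝕜 E ι₀ ι : Type*} [RCLike 𝕜]
    [NormedAddCommGroup E] [InnerProductSpace 𝕜 E] [FiniteDimensional 𝕜 E] [Fintype ι]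
    {e : ι₀ → E} (he : Orthonormal 𝕜 e) (σ : ι₀ ↪ ι)
    (hcard : Module.finrank 𝕜 E = Fintype.card ι) :
    ∃ b : OrthonormalBasis ι 𝕜 E, ∀ i, b (σ i) = e i := by
  have hrestrict : (Set.range σ).domRestrict (Function.extend σ e 0)
      = e ∘ (Equiv.ofInjective σ σ.injective).symm := by
    funext ⟨_, i, rfl⟩
    simp [σ.injective.extend_apply]
  obtain ⟨b, hb⟩ := Orthonormal.exists_orthonormalBasis_extension_of_card_eq hcard
    (v := Function.extend σ e 0) (s := Set.range σ)
    (by rw [hrestrict]; exact he.comp _ (Equiv.injective _))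
  exact ⟨b, fun i => by rw [hb _ (Set.mem_range_self i), σ.injective.extend_apply]⟩

theorem isCompact_setOf_orthonormal {E ι : Type*} [NormedAddCommGroup E] [InnerProductSpace ℝ E]
    [FiniteDimensional ℝ E] [Fintype ι] : IsCompact {e : ι → E | Orthonormal ℝ e} := by
  classical
  refine Metric.isCompact_of_isClosed_isBounded ?_ ?_
  · have : {e : ι → E | Orthonormal ℝ e}
        = ⋂ i, ⋂ j, {e : ι → E | ⟪e i, e j⟫ = if i = j then 1 else 0} := by
      ext e
      simp [orthonormal_iff_ite]
    rw [this]
    exact isClosed_iInter fun i => isClosed_iInter fun j =>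
      isClosed_eq (by fun_prop) continuous_const
  · refine (Metric.isBounded_closedBall (x := (0 : ι → E)) (r := 1)).subset fun e he => ?_
    simpa [pi_norm_le_iff_of_nonneg] using fun i => (he.1 i).le

theorem continuous_gaussK {n : ℕ} {F : Type*} [NormedAddCommGroup F] [InnerProductSpace ℝ F]
    (c : ℝ) (h : EV n →ₗ[ℝ] EV n →ₗ[ℝ] F) :
    Continuous fun p : EV n × EV n => gaussK (fun _ _ => c) h p.1 p.2 := by
  let B : EV n →L[ℝ] EV n →L[ℝ] F := LinearMap.toContinuousLinearMap
    ((LinearMap.toContinuousLinearMap : (EV n →ₗ[ℝ] F) ≃ₗ[ℝ] _).toLinearMap ∘ₗ h)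
  have hB : Continuous fun p : EV n × EV n => h p.1 p.2 :=
    B.continuous₂.comp (continuous_fst.prodMk continuous_snd)
  unfold gaussK
  fun_prop

theorem exists_orthonormal_deltaInv_eq {n k : ℕ} {K : EV n → EV n → ℝ}
    (hK : Continuous fun p : EV n × EV n => K p.1 p.2) (d : Fin k → ℕ) (hd : ∑ j, d j ≤ n) :
    ∃ e : (Σ j : Fin k, Fin (d j)) → EV n, Orthonormal ℝ e ∧
      deltaInv K d = scalarCurv K - ∑ j, tauFam K (fun a => e ⟨j, a⟩) := by
  have hcont : Continuous fun e : (Σ j : Fin k, Fin (d j)) → EV n =>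
      ∑ j, tauFam K (fun a => e ⟨j, a⟩) :=
    continuous_finsetSum _ fun j _ => continuous_finsetSum _ fun p _ =>
      hK.comp (f := fun e : (Σ j : Fin k, Fin (d j)) → EV n => (e ⟨j, p.1⟩, e ⟨j, p.2⟩))
        (by fun_prop)
  have hne : (deltaSet K d).Nonempty := by
    obtain ⟨f⟩ : Nonempty ((Σ j : Fin k, Fin (d j)) ↪ Fin n) :=
      Function.Embedding.nonempty_of_card_le (by simpa using hd)
    exact ⟨_, _, (EuclideanSpace.basisFun (Fin n) ℝ).orthonormal.comp f f.injective, rfl⟩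
  have hcompact : IsCompact (deltaSet K d) := by
    convert isCompact_setOf_orthonormal.image hcont using 1
    ext
    simp [deltaSet, eq_comm]
  obtain ⟨e, he, hinf⟩ := hcompact.sInf_mem hne
  exact ⟨e, he, by rw [deltaInv, hinf]⟩

section Singletons

variable {k : ℕ} (d : Fin k → ℕ) (r : ℕ)

def withSingletons : Fin k ⊕ Fin r → ℕ := Sum.elim d fun _ => 1

theorem sum_tauFam_withSingletons {n : ℕ} (K : EV n → EV n → ℝ)
    (u : (Σ s, Fin (withSingletons d r s)) → EV n) :
    ∑ s, tauFam K (fun a => u ⟨s, a⟩) = ∑ j, tauFam K (fun a => u ⟨Sum.inl j, a⟩) := by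
  have hsingle : ∀ v : Fin 1 → EV n, tauFam K v = 0 := fun v =>
    Finset.sum_eq_zero fun p hp =>
      absurd (Finset.mem_filter.1 hp).2 (by simp [Subsingleton.elim p.1 p.2])
  simp only [Fintype.sum_sum_type]
  rw [add_eq_left]
  exact Finset.sum_eq_zero fun i _ => hsingle fun a => u ⟨Sum.inr i, a⟩

theorem sum_withSingletons_mul_sub_one :
    ∑ s, (withSingletons d r s : ℝ) * (withSingletons d r s - 1) = ∑ j, (d j : ℝ) * (d j - 1) := by
  simp [Fintype.sum_sum_type, withSingletons]

theorem card_sigma_withSingletons :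
    Fintype.card (Σ s, Fin (withSingletons d r s)) = ∑ j, d j + r := by
  simp only [Fintype.card_sigma, Fintype.card_fin, Fintype.sum_sum_type]
  simp [withSingletons]

theorem Orthonormal.exists_orthonormalBasis_withSingletons {n : ℕ}
    {e : (Σ j : Fin k, Fin (d j)) → EV n} (he : Orthonormal ℝ e) (hd : ∑ j, d j ≤ n) :
    ∃ b : OrthonormalBasis (Σ s, Fin (withSingletons d (n - ∑ j, d j) s)) ℝ (EV n),
      ∀ j a, b ⟨Sum.inl j, a⟩ = e ⟨j, a⟩ := by
  let σ : (Σ j : Fin k, Fin (d j)) ↪ Σ s, Fin (withSingletons d (n - ∑ j, d j) s) :=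
    ⟨fun x => ⟨Sum.inl x.1, x.2⟩, by rintro ⟨j, a⟩ ⟨j', a'⟩ h; cases h; rfl⟩
  obtain ⟨b, hb⟩ := he.exists_orthonormalBasis_comp_eq σ
    (by rw [card_sigma_withSingletons, finrank_euclideanSpace_fin]; omega)
  exact ⟨b, fun j a => hb ⟨j, a⟩⟩

theorem cCoeff_eq_card {n : ℕ} (hd : ∑ j, d j ≤ n) :
    cCoeff n d = (n : ℝ) ^ 2 * (Fintype.card (Fin k ⊕ Fin (n - ∑ j, d j)) - 1)
      / (2 * Fintype.card (Fin k ⊕ Fin (n - ∑ j, d j))) := by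
  have : (Fintype.card (Fin k ⊕ Fin (n - ∑ j, d j)) : ℝ) = n + k - ∑ j, (d j : ℝ) := by
    rw [Fintype.card_sum, Fintype.card_fin, Fintype.card_fin, Nat.cast_add, Nat.cast_sub hd]
    push_cast
    ring
  rw [cCoeff, this]
  ring_nf

end Singletons

theorem nontrivial_of_InS {n k : ℕ} (hn : 2 ≤ n) {d : Fin k → ℕ} (hd : InS n d) :
    Nontrivial (Fin k ⊕ Fin (n - ∑ j, d j)) := by
  rw [← Fintype.one_lt_card_iff_nontrivial, Fintype.card_sum, Fintype.card_fin, Fintype.card_fin]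
  rcases k with _ | _ | k
  · rw [Fin.sum_univ_zero]
    omega
  · rw [Fin.sum_univ_one]
    have := (hd.1 0).2
    omega
  · omega

/-- Theorems 5.16 and 5.17.  Let `M` be a Lagrangian submanifold of a complex
space form `M^n(4c)` of constant holomorphic sectional curvature `4c`, encoded
at a point by its second fundamental form `h` — with values in the normal space
`J(T_pM)`, identified with `T_pM` via the complex structure `J`, so that the
Lagrangian condition makes the cubic form `⟨h(X,Y),JZ⟩` totally symmetric —
and the Gauss equation `K(X∧Y) = c + ⟨h(X,X),h(Y,Y)⟩ - ‖h(X,Y)‖²` (tangent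
planes of a Lagrangian submanifold are totally real, of ambient sectional
curvature `c`).  Then for each `(n_1,…,n_k) ∈ 𝒮(n)` one has
`δ(n_1,…,n_k) ≤ [n²(n+k-1-Σnⱼ)/(2(n+k-Σnⱼ))] H² + ½[n(n-1) - Σ nⱼ(nⱼ-1)] c`,
and if equality holds (at the point), then the mean curvature vector vanishes
there, i.e. `M` is minimal at that point. -/
theorem lagrangian_delta_inequality_and_minimality (n : ℕ) (hn : 2 ≤ n) (c : ℝ)
    (h : EV n →ₗ[ℝ] EV n →ₗ[ℝ] EV n)
    (hsymm : ∀ X Y : EV n, h X Y = h Y X)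
    (hlagrangian : ∀ X Y Z : EV n, ⟪h X Y, Z⟫ = ⟪h X Z, Y⟫)
    {k : ℕ} (d : Fin k → ℕ) (hd : InS n d) :
    deltaInv (gaussK (fun _ _ => c) h) d ≤
      cCoeff n d * ‖meanCurv h‖ ^ 2 +
        (1 / 2) * ((n : ℝ) * ((n : ℝ) - 1) - ∑ j, (d j : ℝ) * ((d j : ℝ) - 1)) * c ∧
    (deltaInv (gaussK (fun _ _ => c) h) d =
      cCoeff n d * ‖meanCurv h‖ ^ 2 +
        (1 / 2) * ((n : ℝ) * ((n : ℝ) - 1) - ∑ j, (d j : ℝ) * ((d j : ℝ) - 1)) * c →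
      meanCurv h = 0) := by
  obtain ⟨e, he, hδ⟩ := exists_orthonormal_deltaInv_eq (continuous_gaussK c h) d hd.2
  obtain ⟨b, hb⟩ := he.exists_orthonormalBasis_withSingletons d hd.2
  have := nontrivial_of_InS hn hd
  rw [hδ, cCoeff_eq_card d hd.2, ← sum_withSingletons_mul_sub_one d (n - ∑ j, d j)]
  have hτ : ∑ j, tauFam (gaussK (fun _ _ => c) h) (fun a => e ⟨j, a⟩)
      = ∑ s, tauFam (gaussK (fun _ _ => c) h) (fun a => b ⟨s, a⟩) := by
    simp only [sum_tauFam_withSingletons, hb]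
    rfl
  rw [hτ]
  exact ⟨chen_block_inequality c h hsymm b,
    meanCurv_eq_zero_of_chen_block_eq c h hsymm hlagrangian b⟩
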